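/- For n ∈ ℕ₀, x > 0, y ≥ 1, and p, k > 0, the inequality |ₚβₖ⁽ⁿ⁾(xy)| < |ₚβₖ⁽ⁿ⁾(x)| + |ₚβₖ⁽ⁿ⁾(y)| holds, where |ₚβₖ⁽ⁿ⁾(x)| = (−1)ⁿ ₚβₖ⁽ⁿ⁾(x). -/

import Mathlib

/-!
Differentiating under the integral sign, `(-1)ⁿ ₚβₖ⁽ⁿ⁾(x) = p / kⁿ⁺¹ ∫₀^∞ tⁿ e^{-xt/k} σ(t) dt`
with `σ(t) = 1 / (1 + e^{-t})` the logistic sigmoid. Since `σ > 0`, this is a positive and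
decreasing function of `x > 0`, so for `y ≥ 1`
`|ₚβₖ⁽ⁿ⁾(xy)| ≤ |ₚβₖ⁽ⁿ⁾(x)| < |ₚβₖ⁽ⁿ⁾(x)| + |ₚβₖ⁽ⁿ⁾(y)|`.
-/

open MeasureTheory Real

noncomputable def pkBeta (p k x : ℝ) : ℝ :=
  (p / k) * ∫ t in Set.Ioi (0:ℝ), Real.exp (-(x * t) / k) / (1 + Real.exp (-t))

open Set

noncomputable def laplaceMoment (w : ℝ → ℝ) (n : ℕ) (s : ℝ) : ℝ :=
  ∫ t in Ioi 0, t ^ n * exp (-(s * t)) * w t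

lemma integrableOn_pow_mul_exp_neg_mul {s : ℝ} (hs : 0 < s) (n : ℕ) :
    IntegrableOn (fun t : ℝ => t ^ n * exp (-(s * t))) (Ioi 0) := by
  refine (integrableOn_rpow_mul_exp_neg_mul_rpow (s := n) (p := 1)
    (by linarith [n.cast_nonneg (α := ℝ)]) one_pos hs).congr_fun (fun t _ => ?_)
    measurableSet_Ioi
  simp only [rpow_natCast, rpow_one, neg_mul]

section laplaceMoment

variable {w : ℝ → ℝ} {C : ℝ}

lemma integrableOn_laplaceMoment_integrand (hw : Continuous w) (hwC : ∀ t, ‖w t‖ ≤ C)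
    (n : ℕ) {s : ℝ} (hs : 0 < s) :
    IntegrableOn (fun t => t ^ n * exp (-(s * t)) * w t) (Ioi 0) :=
  (integrableOn_pow_mul_exp_neg_mul hs n).mul_bdd hw.aestronglyMeasurable (ae_of_all _ hwC)

lemma laplaceMoment_pos (hw : Continuous w) (hwC : ∀ t, ‖w t‖ ≤ C) (hw_pos : ∀ t, 0 < w t)
    (n : ℕ) {s : ℝ} (hs : 0 < s) : 0 < laplaceMoment w n s := by
  have h_pos : ∀ t ∈ Ioi (0 : ℝ), 0 < t ^ n * exp (-(s * t)) * w t := fun t (ht : 0 < t) => by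
    have := hw_pos t
    positivity
  rw [laplaceMoment, setIntegral_pos_iff_support_of_nonneg_ae
    ((ae_restrict_mem measurableSet_Ioi).mono fun t ht => (h_pos t ht).le)
    (integrableOn_laplaceMoment_integrand hw hwC n hs)]
  rw [inter_eq_right.2 fun t ht => Function.mem_support.2 (h_pos t ht).ne', Real.volume_Ioi]
  exact ENNReal.zero_lt_top

lemma laplaceMoment_antitoneOn (hw : Continuous w) (hwC : ∀ t, ‖w t‖ ≤ C)
    (hw_nonneg : ∀ t, 0 ≤ w t) (n : ℕ) : AntitoneOn (laplaceMoment w n) (Ioi 0) := by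
  intro s hs s' hs' hss'
  refine setIntegral_mono_on
    (integrableOn_laplaceMoment_integrand hw hwC n (hs.out.trans_le hss'))
    (integrableOn_laplaceMoment_integrand hw hwC n hs) measurableSet_Ioi fun t ht => ?_
  have : 0 < t := ht
  have := hw_nonneg t
  gcongr

lemma hasDerivAt_laplaceMoment (hw : Continuous w) (hwC : ∀ t, ‖w t‖ ≤ C) (n : ℕ) {s : ℝ}
    (hs : 0 < s) : HasDerivAt (laplaceMoment w n) (-laplaceMoment w (n + 1) s) s := by
  have hball : ∀ z ∈ Metric.ball s (s / 2), s / 2 < z := fun z hz => by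
    rw [Metric.mem_ball, Real.dist_eq, abs_lt] at hz; linarith
  have h_bound : ∀ᵐ t ∂(volume.restrict (Ioi 0)), ∀ z ∈ Metric.ball s (s / 2),
      ‖-(t ^ (n + 1) * exp (-(z * t)) * w t)‖ ≤ t ^ (n + 1) * exp (-(s / 2 * t)) * C := by
    filter_upwards [self_mem_ae_restrict measurableSet_Ioi] with t (ht : 0 < t) z hz
    rw [norm_neg, norm_mul, norm_of_nonneg (by positivity)]
    gcongr
    · exact (hball z hz).le
    · exact hwC t
  have h_diff : ∀ᵐ t ∂(volume.restrict (Ioi 0)), ∀ z ∈ Metric.ball s (s / 2),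
      HasDerivAt (fun z => t ^ n * exp (-(z * t)) * w t)
        (-(t ^ (n + 1) * exp (-(z * t)) * w t)) z := ae_of_all _ fun t z _ => by
    have h_exp : HasDerivAt (fun z => exp (-(z * t))) (exp (-(z * t)) * -t) z :=
      (hasDerivAt_mul_const t).neg.exp
    exact ((h_exp.const_mul (t ^ n)).mul_const (w t)).congr_deriv (by ring)
  have := (hasDerivAt_integral_of_dominated_loc_of_deriv_le
    (F := fun z t => t ^ n * exp (-(z * t)) * w t) (Metric.ball_mem_nhds s (half_pos hs))
    (Filter.Eventually.of_forall fun z => by fun_prop)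
    (integrableOn_laplaceMoment_integrand hw hwC n hs) (by fun_prop) h_bound
    ((integrableOn_pow_mul_exp_neg_mul (half_pos hs) (n + 1)).mul_const C) h_diff).2
  rwa [integral_neg] at this

end laplaceMoment

lemma norm_sigmoid_le_one (t : ℝ) : ‖sigmoid t‖ ≤ 1 := by
  rw [norm_of_nonneg (sigmoid_nonneg t)]
  exact sigmoid_le_one t

lemma pkBeta_eq_laplaceMoment_sigmoid (p k : ℝ) :
    pkBeta p k = fun x => p / k * laplaceMoment sigmoid 0 (x / k) := by
  ext x
  simp only [pkBeta, laplaceMoment, pow_zero, one_mul, sigmoid_def]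
  ring_nf

lemma iteratedDeriv_pkBeta (p : ℝ) {k : ℝ} (hk : 0 < k) (n : ℕ) :
    EqOn (iteratedDeriv n (pkBeta p k))
      (fun x => (-1) ^ n * (p / k ^ (n + 1)) * laplaceMoment sigmoid n (x / k)) (Ioi 0) := by
  induction n with
  | zero => exact fun x _ => by simp [pkBeta_eq_laplaceMoment_sigmoid]
  | succ n ih =>
    intro x (hx : 0 < x)
    have h_moment : HasDerivAt (fun x => laplaceMoment sigmoid n (x / k))
        (-laplaceMoment sigmoid (n + 1) (x / k) * (1 / k)) x := by
      have h := hasDerivAt_laplaceMoment continuous_sigmoid norm_sigmoid_le_one n (div_pos hx hk)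
      exact h.comp x ((hasDerivAt_id' x).div_const k)
    rw [iteratedDeriv_succ, (ih.eventuallyEq_of_mem (Ioi_mem_nhds hx)).deriv_eq,
      (h_moment.const_mul _).deriv]
    field_simp
    ring

lemma neg_one_pow_mul_iteratedDeriv_pkBeta (p : ℝ) {k : ℝ} (hk : 0 < k) (n : ℕ) {x : ℝ}
    (hx : 0 < x) :
    (-1) ^ n * iteratedDeriv n (pkBeta p k) x =
      p / k ^ (n + 1) * laplaceMoment sigmoid n (x / k) := by
  rw [iteratedDeriv_pkBeta p hk n hx, ← mul_assoc, ← mul_assoc, ← mul_pow]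
  norm_num

theorem pkBeta_abs_deriv_mul_ineq (p k x y : ℝ) (hp : 0 < p) (hk : 0 < k)
    (hx : 0 < x) (hy : 1 ≤ y) (n : ℕ) :
    (-1 : ℝ) ^ n * iteratedDeriv n (pkBeta p k) (x * y) <
      (-1 : ℝ) ^ n * iteratedDeriv n (pkBeta p k) x +
        (-1 : ℝ) ^ n * iteratedDeriv n (pkBeta p k) y := by
  have hy0 : 0 < y := one_pos.trans_le hy
  have hxy : x ≤ x * y := le_mul_of_one_le_right hx.le hy
  rw [neg_one_pow_mul_iteratedDeriv_pkBeta p hk n (hx.trans_le hxy),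
    neg_one_pow_mul_iteratedDeriv_pkBeta p hk n hx,
    neg_one_pow_mul_iteratedDeriv_pkBeta p hk n hy0]
  have h_anti : laplaceMoment sigmoid n (x * y / k) ≤ laplaceMoment sigmoid n (x / k) :=
    laplaceMoment_antitoneOn continuous_sigmoid norm_sigmoid_le_one sigmoid_nonneg n
      (div_pos hx hk) (div_pos (hx.trans_le hxy) hk) (by gcongr)
  have h_pos : 0 < laplaceMoment sigmoid n (y / k) :=
    laplaceMoment_pos continuous_sigmoid norm_sigmoid_le_one sigmoid_pos n (div_pos hy0 hk)
  have hc : 0 < p / k ^ (n + 1) := by positivity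
  linarith [mul_le_mul_of_nonneg_left h_anti hc.le, mul_pos hc h_pos]
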